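/- arXiv:0801.1844 — 5 statements merged into one kernel-verified Lean document; each statement's English description precedes it below -/
import Mathlib

section
/- If f is holomorphic on an open subset V of the complex plane, Ω is a connected open set, and σ₁, σ₂ : Ω → V are holomorphic branches of f⁻¹ (i.e., f(σᵢ(w)) = w for all w ∈ Ω), then either σ₁(Ω) ∩ σ₂(Ω) = ∅ or σ₁ = σ₂ on all of Ω. -/
/-!
A holomorphic branch `σ` of `f⁻¹` is injective, hence not locally constant, so by the open mapping
theorem it maps every neighbourhood of a point `w` onto a neighbourhood of `σ w`. If two branches
meet, `σ₁ w₁ = σ₂ w₂`, then applying `f` gives `w₁ = w₂ =: w`; near `w` every value `σ₂ w'` is then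
of the form `σ₁ u` with `u` near `w`, and applying `f` once more gives `u = w'`. So the branches
agree near `w`, and by the identity theorem on all of the connected set `Ω`.
-/

open Set Filter Topology

section LeftInverse

variable {X Y : Type*} [TopologicalSpace X] [TopologicalSpace Y]

theorem eventuallyEq_of_leftInverse {f : Y → X} {σ₁ σ₂ : X → Y} {w : X}
    (hf₁ : ∀ᶠ x in 𝓝 w, f (σ₁ x) = x) (hf₂ : ∀ᶠ x in 𝓝 w, f (σ₂ x) = x)
    (hσ₁ : 𝓝 (σ₁ w) ≤ map σ₁ (𝓝 w)) (hσ₂ : ContinuousAt σ₂ w) (hw : σ₁ w = σ₂ w) :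
    σ₁ =ᶠ[𝓝 w] σ₂ := by
  have himage : σ₁ '' {x | f (σ₁ x) = x} ∈ 𝓝 (σ₂ w) :=
    hw ▸ hσ₁ (image_mem_map hf₁)
  filter_upwards [hσ₂.preimage_mem_nhds himage, hf₂] with x ⟨u, hu, hux⟩ hx
  have hxu : x = u := by rw [← hx, ← hux, hu]
  rw [hxu, hux, ← hxu]

end LeftInverse

section Holomorphic

variable {E : Type*} [NormedAddCommGroup E] [NormedSpace ℂ E] [Nontrivial E]

theorem AnalyticAt.nhds_le_map_nhds_of_leftInverse {f : ℂ → E} {σ : E → ℂ} {w : E}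
    (hσ : AnalyticAt ℂ σ w) (hf : ∀ᶠ x in 𝓝 w, f (σ x) = x) :
    𝓝 (σ w) ≤ map σ (𝓝 w) := by
  refine hσ.eventually_constant_or_nhds_le_map_nhds.resolve_left fun hconst => ?_
  have hpure : ∀ᶠ x in 𝓝[≠] w, x = w := nhdsWithin_le_nhds <| by
    filter_upwards [hconst, hf] with x hx hfx
    calc x = f (σ x) := hfx.symm
      _ = f (σ w) := by rw [hx]
      _ = w := hf.self_of_nhds
  obtain ⟨x, hxw, hxne⟩ := (hpure.and self_mem_nhdsWithin).exists
  exact hxne hxw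

theorem AnalyticOnNhd.eqOn_of_leftInverse {f : ℂ → E} {σ₁ σ₂ : E → ℂ} {Ω : Set E}
    (hσ₁ : AnalyticOnNhd ℂ σ₁ Ω) (hσ₂ : AnalyticOnNhd ℂ σ₂ Ω) (hΩo : IsOpen Ω)
    (hΩc : IsPreconnected Ω) (hf₁ : ∀ x ∈ Ω, f (σ₁ x) = x) (hf₂ : ∀ x ∈ Ω, f (σ₂ x) = x)
    {w : E} (hw : w ∈ Ω) (heq : σ₁ w = σ₂ w) : EqOn σ₁ σ₂ Ω := by
  have hΩw : Ω ∈ 𝓝 w := hΩo.mem_nhds hw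
  have hf₁w : ∀ᶠ x in 𝓝 w, f (σ₁ x) = x := eventually_of_mem hΩw hf₁
  have hf₂w : ∀ᶠ x in 𝓝 w, f (σ₂ x) = x := eventually_of_mem hΩw hf₂
  exact hσ₁.eqOn_of_preconnected_of_eventuallyEq hσ₂ hΩc hw <|
    eventuallyEq_of_leftInverse hf₁w hf₂w ((hσ₁ w hw).nhds_le_map_nhds_of_leftInverse hf₁w)
      (hσ₂ w hw).continuousAt heq

end Holomorphic

theorem stmt_0_general (Ω : Set ℂ) (hΩo : IsOpen Ω) (hΩc : IsConnected Ω)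
    (f σ₁ σ₂ : ℂ → ℂ)
    (h1 : DifferentiableOn ℂ σ₁ Ω) (h2 : DifferentiableOn ℂ σ₂ Ω)
    (hi1 : ∀ w ∈ Ω, f (σ₁ w) = w) (hi2 : ∀ w ∈ Ω, f (σ₂ w) = w) :
    σ₁ '' Ω ∩ σ₂ '' Ω = ∅ ∨ EqOn σ₁ σ₂ Ω := by
  refine (eq_empty_or_nonempty _).imp id ?_
  rintro ⟨z, ⟨w, hw, hz₁⟩, ⟨w', hw', hz₂⟩⟩
  have hww' : w = w' := by rw [← hi1 w hw, ← hi2 w' hw', hz₁, hz₂]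
  subst hww'
  exact (h1.analyticOnNhd hΩo).eqOn_of_leftInverse (h2.analyticOnNhd hΩo) hΩo
    hΩc.isPreconnected hi1 hi2 hw (hz₁.trans hz₂.symm)

/-- If `f` is holomorphic on an open set `V ⊆ ℂ` and `σ₁, σ₂` are holomorphic branches of
`f⁻¹` defined on a connected open set `Ω` (with values in `V`), then either the images
`σ₁(Ω)` and `σ₂(Ω)` are disjoint, or `σ₁ ≡ σ₂` on `Ω`. -/
theorem stmt_0 (V Ω : Set ℂ) (hV : IsOpen V) (hΩo : IsOpen Ω) (hΩc : IsConnected Ω)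
    (f σ₁ σ₂ : ℂ → ℂ) (hf : DifferentiableOn ℂ f V)
    (h1 : DifferentiableOn ℂ σ₁ Ω) (h2 : DifferentiableOn ℂ σ₂ Ω)
    (m1 : MapsTo σ₁ Ω V) (m2 : MapsTo σ₂ Ω V)
    (hi1 : ∀ w ∈ Ω, f (σ₁ w) = w) (hi2 : ∀ w ∈ Ω, f (σ₂ w) = w) :
    σ₁ '' Ω ∩ σ₂ '' Ω = ∅ ∨ EqOn σ₁ σ₂ Ω :=
  stmt_0_general Ω hΩo hΩc f σ₁ σ₂ h1 h2 hi1 hi2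
end

section
/- Let φ be a rational function mapping the open unit disc 𝕌 into itself, and define the exterior map φₑ(w) = 1/conj(φ(1/conj(w))). Then the preimage under φₑ of the open unit disc is contained in the open unit disc: if φₑ(w) ∈ 𝕌 then w ∈ 𝕌. -/
open Metric

/-!
Inversion `ρ` exchanges the closed unit disc and the exterior of the open one. If `w ∉ 𝕌`, then
`z = ρ w` lies in the closed disc, so by continuity `φ z` lies in the closure of `φ(𝕌) ⊆ 𝕌`,
i.e. `‖φ z‖ ≤ 1`; hence `‖φₑ w‖ = ‖φ z‖⁻¹ ≥ 1`.
-/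

theorem Set.MapsTo.mem_closedBall_of_continuousAt {E F : Type*} [NormedAddCommGroup E]
    [NormedSpace ℝ E] [PseudoMetricSpace F] {f : E → F} {x : E} {y : F} {r s : ℝ}
    (hf : Set.MapsTo f (ball x r) (ball y s)) (hr : r ≠ 0) {z : E} (hfz : ContinuousAt f z)
    (hz : z ∈ closedBall x r) : f z ∈ closedBall y s := by
  rw [← closure_ball x hr] at hz
  exact closure_ball_subset_closedBall <|
    closure_mono hf.image_subset (hfz.continuousWithinAt.mem_closure_image hz)

theorem stmt_1_general (p q : Polynomial ℂ)
    (φ : ℂ → ℂ) (hφ : ∀ z, φ z = p.eval z / q.eval z)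
    (hmaps : Set.MapsTo φ (ball 0 1) (ball 0 1))
    (w : ℂ) (hw0 : φ ((starRingEnd ℂ) w)⁻¹ ≠ 0)
    (hwe : ((starRingEnd ℂ) (φ ((starRingEnd ℂ) w)⁻¹))⁻¹ ∈ ball (0 : ℂ) 1) :
    w ∈ ball (0 : ℂ) 1 := by
  by_contra hw
  rw [mem_ball_zero_iff, not_lt] at hw
  set z : ℂ := ((starRingEnd ℂ) w)⁻¹
  have hz : z ∈ closedBall 0 1 := by
    rw [mem_closedBall_zero_iff, norm_inv, RCLike.norm_conj]
    exact inv_le_one_of_one_le₀ hw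
  have hqz : q.eval z ≠ 0 := fun h => hw0 (by rw [hφ, h, div_zero])
  have hφz : ContinuousAt φ z := funext hφ ▸ p.continuousAt.div q.continuousAt hqz
  have hle : ‖φ z‖ ≤ 1 :=
    mem_closedBall_zero_iff.mp (hmaps.mem_closedBall_of_continuousAt one_ne_zero hφz hz)
  rw [mem_ball_zero_iff, norm_inv, RCLike.norm_conj] at hwe
  have hgt : 1 < ‖φ z‖ := (inv_lt_one₀ (norm_pos_iff.mpr hw0)).mp hwe
  linarith

/-- If `φ` is a rational function mapping the open unit disc `𝕌` into itself, and
`φₑ(w) = 1/conj(φ(1/conj w))` is the exterior map, then `φₑ⁻¹(𝕌) ⊆ 𝕌`: whenever the value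
`φ(1/conj w)` is genuinely defined and nonzero (so that the formula for `φₑ(w)` represents
the honest value on the Riemann sphere) and `φₑ(w) ∈ 𝕌`, one has `w ∈ 𝕌`. -/
theorem stmt_1 (p q : Polynomial ℂ) (hq : q ≠ 0)
    (φ : ℂ → ℂ) (hφ : ∀ z, φ z = p.eval z / q.eval z)
    (hmaps : Set.MapsTo φ (ball 0 1) (ball 0 1))
    (w : ℂ) (hw0 : φ ((starRingEnd ℂ) w)⁻¹ ≠ 0)
    (hwe : ((starRingEnd ℂ) (φ ((starRingEnd ℂ) w)⁻¹))⁻¹ ∈ ball (0 : ℂ) 1) :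
    w ∈ ball (0 : ℂ) 1 :=
  stmt_1_general p q φ hφ hmaps w hw0 hwe
end

section
/- A finite Blaschke product of degree d ≥ 2 has at least one critical point in the exterior of the closed unit disc, and consequently a critical value of modulus greater than 1; in particular, no finite Blaschke product of degree ≥ 2 is outer regular. -/
/-!
Write `φ = ω B / D` with `B = ∏ (a_j - z)` and `D = ∏ (1 - conj a_j z)`. The finite critical points
are the zeros of `W = ω · wronskian D B = ω ∑_j (|a_j|² - 1) ∏_{k ≠ j} (1 - conj a_k z)(a_k - z)`.
Each factor `(1 - conj a z)(a - z)` is self-inversive of degree 2, so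
`|W(1/z̄)| |z|^(2d-2) = |W(z)|`; on the unit circle it equals `-z |a - z|²`, so there `W` is a power
of `-z` times a negative real number and does not vanish. If `W` had no zero outside the closed
disc, reflection would leave `0` as its only zero, so `W = c z^n` with `2n = 2d - 2`, i.e. `∞` is
critical. Finally `|φ| > 1` outside the closed disc, and `|φ(∞)| = 1 / ∏ |a_j| > 1` unless some
`a_j = 0`, in which case `deg D < d` and `φ(∞) = ∞`.
-/

open Polynomial ComplexConjugate

theorem Polynomial.wronskian_prod {R ι : Type*} [CommRing R] [DecidableEq ι] (s : Finset ι)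
    (f g : ι → R[X]) :
    wronskian (∏ i ∈ s, f i) (∏ i ∈ s, g i) =
      ∑ i ∈ s, wronskian (f i) (g i) * ∏ k ∈ s.erase i, (f k * g k) := by
  simp only [wronskian, derivative_prod_finset, Finset.mul_sum, Finset.sum_mul,
    ← Finset.sum_sub_distrib]
  refine Finset.sum_congr rfl fun i hi => ?_
  rw [← Finset.mul_prod_erase s f hi, ← Finset.mul_prod_erase s g hi, Finset.prod_mul_distrib]
  ring

theorem Polynomial.wronskian_one_sub_C_mul_X_C_sub_X {R : Type*} [CommRing R] (c b : R) :
    wronskian (1 - C c * X) (C b - X) = C (c * b - 1) := by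
  simp only [wronskian, derivative_one, derivative_C, derivative_X, derivative_C_mul_X, map_sub,
    map_mul, map_one]
  ring

theorem Complex.norm_one_sub_conj_mul_lt_norm_sub {a w : ℂ} (ha : ‖a‖ < 1) (hw : 1 < ‖w‖) :
    ‖1 - conj a * w‖ < ‖a - w‖ := by
  have key : ‖a - w‖ ^ 2 - ‖1 - conj a * w‖ ^ 2 = (1 - ‖a‖ ^ 2) * (‖w‖ ^ 2 - 1) := by
    simp only [Complex.sq_norm, Complex.normSq_apply, Complex.sub_re, Complex.sub_im,
      Complex.mul_re, Complex.mul_im, Complex.one_re, Complex.one_im, Complex.conj_re,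
      Complex.conj_im]
    ring
  have : 0 < (1 - ‖a‖ ^ 2) * (‖w‖ ^ 2 - 1) := by
    apply mul_pos <;> nlinarith [norm_nonneg a]
  exact lt_of_pow_lt_pow_left₀ 2 (norm_nonneg _) (by linarith)

theorem Complex.conj_sq_mul_one_sub_conj_mul_mul_sub_inv_conj {a z : ℂ} (hz : z ≠ 0) :
    conj z ^ 2 * ((1 - conj a * (conj z)⁻¹) * (a - (conj z)⁻¹)) =
      conj ((1 - conj a * z) * (a - z)) := by
  have : conj z ≠ 0 := by simpa using hz
  simp only [map_mul, map_sub, map_one, Complex.conj_conj]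
  field_simp
  ring

theorem Complex.one_sub_conj_mul_mul_sub_of_norm_eq_one {a z : ℂ} (hz : ‖z‖ = 1) :
    (1 - conj a * z) * (a - z) = -z * (‖a - z‖ ^ 2 : ℝ) := by
  have hzz : z * conj z = 1 := by
    rw [Complex.mul_conj, Complex.normSq_eq_norm_sq, hz]; norm_num
  push_cast
  rw [← Complex.mul_conj', map_sub]
  linear_combination (z - a) * hzz

theorem Polynomial.eq_C_leadingCoeff_mul_X_pow_of_forall_isRoot {k : Type*} [Field k]
    [IsAlgClosed k] {p : k[X]} (h : ∀ z, p.IsRoot z → z = 0) :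
    p = C p.leadingCoeff * X ^ p.natDegree := by
  rcases eq_or_ne p 0 with rfl | hp
  · simp
  have hcard : Multiset.card p.roots = p.natDegree :=
    (splits_iff_card_roots).mp (IsAlgClosed.splits _)
  have hroots : p.roots = Multiset.replicate p.natDegree 0 :=
    Multiset.eq_replicate.mpr ⟨hcard, fun z hz => h z (isRoot_of_mem_roots hz)⟩
  conv_lhs => rw [← C_leadingCoeff_mul_prod_multiset_X_sub_C hcard, hroots]
  simp

theorem Polynomial.two_mul_natDegree_eq_of_norm_eval_inv_conj {p : ℂ[X]} {m : ℕ} (hp : p ≠ 0)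
    (hrefl : ∀ z ≠ 0, ‖p.eval (conj z)⁻¹‖ * ‖z‖ ^ m = ‖p.eval z‖)
    (hroots : ∀ z, 1 ≤ ‖z‖ → ¬p.IsRoot z) : 2 * p.natDegree = m := by
  have hzero : ∀ z, p.IsRoot z → z = 0 := by
    intro z hz
    by_contra hz0
    have hz1 : ‖z‖ < 1 := not_le.mp fun h => hroots z h hz
    refine hroots (conj z)⁻¹ ?_ ?_
    · rw [norm_inv, Complex.norm_conj]
      exact (one_le_inv₀ (norm_pos_iff.mpr hz0)).mpr hz1.le
    · have := hrefl z hz0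
      rw [hz.eq_zero, norm_zero, mul_eq_zero, norm_eq_zero] at this
      exact this.resolve_right (pow_ne_zero _ (norm_ne_zero_iff.mpr hz0))
  have hlc : 0 < ‖p.leadingCoeff‖ := norm_pos_iff.mpr (leadingCoeff_ne_zero.mpr hp)
  have h2 := hrefl 2 two_ne_zero
  rw [eq_C_leadingCoeff_mul_X_pow_of_forall_isRoot hzero] at h2
  simp only [eval_mul, eval_C, eval_pow, eval_X, norm_mul, norm_pow, norm_inv,
    Complex.norm_two, map_ofNat] at h2
  have : (2 : ℝ) ^ m = 2 ^ (2 * p.natDegree) := by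
    rw [inv_pow, mul_assoc, mul_right_inj' hlc.ne', inv_mul_eq_iff_eq_mul₀ (by positivity)] at h2
    rw [h2, two_mul, pow_add]
  exact (Nat.pow_right_injective le_rfl (by exact_mod_cast this)).symm

section Blaschke

variable {d : ℕ} (a : Fin d → ℂ)

noncomputable def blaschkeNumerator : ℂ[X] := ∏ j, (C (a j) - X)

noncomputable def blaschkeDenominator : ℂ[X] := ∏ j, (1 - C (conj (a j)) * X)

theorem eval_wronskian_blaschke (z : ℂ) :
    (wronskian (blaschkeDenominator a) (blaschkeNumerator a)).eval z =
      ∑ j, ((‖a j‖ ^ 2 - 1 : ℝ) : ℂ) *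
        ∏ k ∈ Finset.univ.erase j, ((1 - conj (a k) * z) * (a k - z)) := by
  simp [blaschkeDenominator, blaschkeNumerator, wronskian_prod,
    wronskian_one_sub_C_mul_X_C_sub_X, eval_finsetSum, eval_prod, Complex.conj_mul']

theorem conj_pow_mul_eval_wronskian_blaschke_inv_conj {z : ℂ} (hz : z ≠ 0) :
    conj z ^ (2 * (d - 1)) *
        (wronskian (blaschkeDenominator a) (blaschkeNumerator a)).eval (conj z)⁻¹ =
      conj ((wronskian (blaschkeDenominator a) (blaschkeNumerator a)).eval z) := by
  simp only [eval_wronskian_blaschke, Finset.mul_sum, map_sum]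
  refine Finset.sum_congr rfl fun j _ => ?_
  rw [map_mul, Complex.conj_ofReal, map_prod, ← Finset.prod_congr rfl fun k _ =>
      Complex.conj_sq_mul_one_sub_conj_mul_mul_sub_inv_conj (a := a k) hz,
    Finset.prod_mul_distrib (f := fun _ => conj z ^ 2), Finset.prod_const,
    Finset.card_erase_of_mem (Finset.mem_univ j), Finset.card_univ, Fintype.card_fin, ← pow_mul,
    mul_comm 2]
  ring

theorem norm_eval_wronskian_blaschke_inv_conj {z : ℂ} (hz : z ≠ 0) :
    ‖(wronskian (blaschkeDenominator a) (blaschkeNumerator a)).eval (conj z)⁻¹‖ *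
        ‖z‖ ^ (2 * (d - 1)) =
      ‖(wronskian (blaschkeDenominator a) (blaschkeNumerator a)).eval z‖ := by
  rw [← Complex.norm_conj ((wronskian _ _).eval z),
    ← conj_pow_mul_eval_wronskian_blaschke_inv_conj a hz, norm_mul, norm_pow, Complex.norm_conj,
    mul_comm]

theorem eval_wronskian_blaschke_ne_zero (hd : 0 < d) (ha : ∀ j, ‖a j‖ < 1) {z : ℂ}
    (hz : ‖z‖ = 1) : (wronskian (blaschkeDenominator a) (blaschkeNumerator a)).eval z ≠ 0 := by
  have : Nonempty (Fin d) := Fin.pos_iff_nonempty.mp hd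
  have hsum : ∑ j, (‖a j‖ ^ 2 - 1) * ∏ k ∈ Finset.univ.erase j, ‖a k - z‖ ^ 2 < 0 := by
    refine Finset.sum_neg (fun j _ => mul_neg_of_neg_of_pos ?_ ?_) Finset.univ_nonempty
    · nlinarith [ha j, norm_nonneg (a j)]
    · refine Finset.prod_pos fun k _ => pow_pos (norm_pos_iff.mpr ?_) 2
      exact sub_ne_zero.mpr fun h => (ha k).ne (h ▸ hz)
  have hz0 : z ≠ 0 := norm_ne_zero_iff.mp (by rw [hz]; exact one_ne_zero)
  have heval : (wronskian (blaschkeDenominator a) (blaschkeNumerator a)).eval z =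
      (-z) ^ (d - 1) *
        ((∑ j, (‖a j‖ ^ 2 - 1) * ∏ k ∈ Finset.univ.erase j, ‖a k - z‖ ^ 2 : ℝ) : ℂ) := by
    simp only [eval_wronskian_blaschke, Complex.one_sub_conj_mul_mul_sub_of_norm_eq_one hz,
      Finset.prod_mul_distrib, Finset.prod_const, Finset.card_erase_of_mem (Finset.mem_univ _),
      Finset.card_univ, Fintype.card_fin]
    push_cast
    rw [Finset.mul_sum]
    exact Finset.sum_congr rfl fun j _ => by ring
  rw [heval]
  exact mul_ne_zero (pow_ne_zero _ (neg_ne_zero.mpr hz0)) (Complex.ofReal_ne_zero.mpr hsum.ne)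

theorem one_lt_norm_eval_blaschke_div (hd : 0 < d) {ω : ℂ} (hω : ‖ω‖ = 1)
    (ha : ∀ j, ‖a j‖ < 1) {w : ℂ} (hw : 1 < ‖w‖) (hQ : (blaschkeDenominator a).eval w ≠ 0) :
    1 < ‖(C ω * blaschkeNumerator a).eval w / (blaschkeDenominator a).eval w‖ := by
  have : Nonempty (Fin d) := Fin.pos_iff_nonempty.mp hd
  rw [norm_div, one_lt_div (norm_pos_iff.mpr hQ)]
  simp only [blaschkeNumerator, blaschkeDenominator, eval_mul, eval_C, eval_prod, eval_sub,
    eval_one, eval_X, norm_mul, norm_prod, hω, one_mul] at hQ ⊢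
  refine Finset.prod_lt_prod_of_nonempty (fun j _ => norm_pos_iff.mpr ?_)
    (fun j _ => Complex.norm_one_sub_conj_mul_lt_norm_sub (ha j) hw) Finset.univ_nonempty
  exact fun h => hQ (Finset.prod_eq_zero (Finset.mem_univ j) h)

theorem natDegree_blaschkeDenominator_lt {j : Fin d} (hj : a j = 0) :
    (blaschkeDenominator a).natDegree < d := by
  calc (blaschkeDenominator a).natDegree
      ≤ ∑ k, (1 - C (conj (a k)) * X : ℂ[X]).natDegree := natDegree_prod_le _ _
    _ < ∑ _k : Fin d, 1 :=
        Finset.sum_lt_sum (fun k _ => by compute_degree) ⟨j, Finset.mem_univ j, by simp [hj]⟩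
    _ = d := by simp

theorem norm_leadingCoeff_blaschke_div (ω : ℂ) (ha : ∀ j, a j ≠ 0) :
    ‖(C ω * blaschkeNumerator a).leadingCoeff / (blaschkeDenominator a).leadingCoeff‖ =
      ‖ω‖ / ∏ j, ‖a j‖ := by
  have hnum : ∀ b : ℂ, (C b - X).leadingCoeff = -1 := fun b => by
    rw [← neg_sub, leadingCoeff_neg, leadingCoeff_X_sub_C]
  have hden : ∀ j, (1 - C (conj (a j)) * X).leadingCoeff = -conj (a j) := fun j => by
    rw [sub_eq_neg_add, ← neg_mul, ← C_neg, ← C_1,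
      leadingCoeff_linear (by simpa using ha j)]
  simp [blaschkeNumerator, blaschkeDenominator, leadingCoeff_prod, hnum, hden, norm_prod]

theorem natDegree_blaschkeDenominator_lt_or_one_lt_norm_leadingCoeff_div (hd : 0 < d)
    {ω : ℂ} (hω : ‖ω‖ = 1) (ha : ∀ j, ‖a j‖ < 1) :
    (blaschkeDenominator a).natDegree < d ∨
      1 < ‖(C ω * blaschkeNumerator a).leadingCoeff / (blaschkeDenominator a).leadingCoeff‖ := by
  by_cases h0 : ∃ j, a j = 0
  · obtain ⟨j, hj⟩ := h0
    exact Or.inl (natDegree_blaschkeDenominator_lt a hj)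
  push Not at h0
  have : Nonempty (Fin d) := Fin.pos_iff_nonempty.mp hd
  right
  rw [norm_leadingCoeff_blaschke_div a ω h0, hω,
    one_lt_div (Finset.prod_pos fun j _ => norm_pos_iff.mpr (h0 j))]
  calc ∏ j, ‖a j‖ < ∏ _j : Fin d, (1 : ℝ) := Finset.prod_lt_prod_of_nonempty
        (fun j _ => norm_pos_iff.mpr (h0 j)) (fun j _ => ha j) Finset.univ_nonempty
    _ = 1 := Finset.prod_const_one

end Blaschke

/-- A finite Blaschke product `φ = P/Q` of degree `d ≥ 2` (here `P, Q` are the numerator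
and denominator polynomials) has a critical point in the exterior of the closed unit disc,
with a critical value of modulus greater than one; in particular it is not outer regular.
The finite critical points are the zeros of the Wronskian `W = P'Q - PQ'` (a pole `z`, i.e.
a zero of `Q`, which is a zero of `W` is a multiple pole, hence critical with critical
value `∞`); the point `∞` is a critical point exactly when `deg W < 2d - 2`, and the value
there is `∞` (when `deg Q < d`) or the ratio of leading coefficients. -/
theorem stmt_7 (d : ℕ) (hd : 2 ≤ d) (ω : ℂ) (hω : ‖ω‖ = 1)
    (a : Fin d → ℂ) (ha : ∀ j, ‖a j‖ < 1)
    (P Q W : Polynomial ℂ)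
    (hP : P = C ω * ∏ j, (C (a j) - X))
    (hQ : Q = ∏ j, (1 - C ((starRingEnd ℂ) (a j)) * X))
    (hW : W = derivative P * Q - P * derivative Q) :
    (∃ z : ℂ, 1 < ‖z‖ ∧ W.eval z = 0 ∧ (Q.eval z = 0 ∨ 1 < ‖P.eval z / Q.eval z‖))
      ∨ (W.natDegree < 2 * d - 2 ∧ (Q.natDegree < d ∨ 1 < ‖P.leadingCoeff / Q.leadingCoeff‖)) := by
  change P = C ω * blaschkeNumerator a at hP
  change Q = blaschkeDenominator a at hQ
  set R := wronskian (blaschkeDenominator a) (blaschkeNumerator a)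
  have hω0 : ω ≠ 0 := norm_ne_zero_iff.mp (by rw [hω]; exact one_ne_zero)
  have hWR : W = C ω * R := by
    rw [hW, hP, hQ, derivative_C_mul]
    simp only [R, wronskian]
    ring
  subst hP hQ
  by_cases hout : ∃ z : ℂ, 1 < ‖z‖ ∧ W.eval z = 0
  · obtain ⟨z, hz, hWz⟩ := hout
    refine Or.inl ⟨z, hz, hWz, or_iff_not_imp_left.mpr fun hQz => ?_⟩
    exact one_lt_norm_eval_blaschke_div a (by omega) hω ha hz hQz
  refine Or.inr ⟨?_, natDegree_blaschkeDenominator_lt_or_one_lt_norm_leadingCoeff_div a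
    (by omega) hω ha⟩
  rw [hWR, natDegree_C_mul hω0]
  rcases eq_or_ne R 0 with hR | hR
  · rw [hR, natDegree_zero]
    omega
  have hroots : ∀ z, 1 ≤ ‖z‖ → ¬R.IsRoot z := by
    intro z hz hRz
    rcases hz.eq_or_lt with hz | hz
    · exact eval_wronskian_blaschke_ne_zero a (by omega) ha hz.symm hRz
    · exact hout ⟨z, hz, by rw [hWR, eval_mul, hRz.eq_zero, mul_zero]⟩
  have hdeg := two_mul_natDegree_eq_of_norm_eval_inv_conj hR
    (fun z hz => norm_eval_wronskian_blaschke_inv_conj a hz) hroots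
  omega
end

section
/- Let φ(z) = 1/(3 − z − z²). Then φₑ(w) = 3 − 1/w − 1/w², and the functions σ₁(z) = (1 + √(13 − 4z))/(2(3 − z)) and σ₂(z) = (1 − √(13 − 4z))/(2(3 − z)) (principal square root) are holomorphic on the closed unit disc and satisfy φₑ(σⱼ(z)) = z there; moreover σ₁ and σ₂ map the open unit disc into itself and are nonvanishing on the closed unit disc. -/
/-!
For any square root `t` of `13 - 4z` with `z ≠ 3` one has `(1 + t)(t - 1) = 4(3 - z)`, so the
branch `(1 + t)/(2(3 - z))` equals `2/(t - 1)`: its reciprocal `u = (t - 1)/2` solves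
`u² + u = 3 - z`, which is `φₑ = z`, and it never vanishes. Both `σⱼ` are of this form
(with `t = ±√(13 - 4z)`). On the open disc `|t|² = |13 - 4z| > 9`, so `|t - 1| > 2` and
`|σⱼ| < 1`; on the closed disc `Re(13 - 4z) ≥ 9`, so the principal root is holomorphic there.
-/

open Metric

section QuadraticBranch

variable {z t : ℂ}

lemma cpow_one_half_sq (w : ℂ) : (w ^ ((1 : ℂ) / 2)) ^ 2 = w := by
  rw [one_div]
  exact_mod_cast Complex.cpow_ofNat_inv_pow w 2

lemma sub_one_ne_zero_of_sq_eq (ht : t ^ 2 = 13 - 4 * z) (hz : z ≠ 3) : t - 1 ≠ 0 := by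
  rintro h
  obtain rfl : t = 1 := sub_eq_zero.mp h
  exact hz (by linear_combination (1 / 4 : ℂ) * ht)

lemma one_add_div_eq_two_div_sub_one (ht : t ^ 2 = 13 - 4 * z) (hz : z ≠ 3) :
    (1 + t) / (2 * (3 - z)) = 2 / (t - 1) := by
  rw [div_eq_div_iff (mul_ne_zero two_ne_zero (sub_ne_zero.mpr hz.symm))
    (sub_one_ne_zero_of_sq_eq ht hz)]
  linear_combination ht

lemma one_add_div_ne_zero (ht : t ^ 2 = 13 - 4 * z) (hz : z ≠ 3) :
    (1 + t) / (2 * (3 - z)) ≠ 0 := by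
  rw [one_add_div_eq_two_div_sub_one ht hz]
  exact div_ne_zero two_ne_zero (sub_one_ne_zero_of_sq_eq ht hz)

lemma three_sub_inv_sub_inv_sq_one_add_div (ht : t ^ 2 = 13 - 4 * z) (hz : z ≠ 3) :
    3 - 1 / ((1 + t) / (2 * (3 - z))) - 1 / ((1 + t) / (2 * (3 - z))) ^ 2 = z := by
  rw [one_add_div_eq_two_div_sub_one ht hz, ← one_div_pow, one_div_div]
  linear_combination (-1 / 4 : ℂ) * ht

lemma three_lt_norm_of_sq_eq (ht : t ^ 2 = 13 - 4 * z) (hz : ‖z‖ < 1) : 3 < ‖t‖ := by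
  have h9 : 3 ^ 2 < ‖t‖ ^ 2 := by
    rw [← norm_pow, ht]
    calc (3 : ℝ) ^ 2 < ‖(13 : ℂ)‖ - ‖4 * z‖ := by simp; linarith
      _ ≤ ‖13 - 4 * z‖ := norm_sub_norm_le _ _
  exact lt_of_pow_lt_pow_left₀ 2 (norm_nonneg t) h9

lemma norm_one_add_div_lt_one (ht : t ^ 2 = 13 - 4 * z) (hz : ‖z‖ < 1) :
    ‖(1 + t) / (2 * (3 - z))‖ < 1 := by
  have hz3 : z ≠ 3 := by rintro rfl; norm_num at hz
  have h2 : 2 < ‖t - 1‖ := by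
    have := norm_sub_norm_le t 1
    have := three_lt_norm_of_sq_eq ht hz
    simp only [norm_one] at *
    linarith
  rw [one_add_div_eq_two_div_sub_one ht hz3, norm_div, div_lt_one (by linarith)]
  simpa using h2

lemma differentiableAt_cpow_one_half_thirteen_sub (hz : ‖z‖ ≤ 1) :
    DifferentiableAt ℂ (fun z : ℂ => (13 - 4 * z) ^ ((1 : ℂ) / 2)) z := by
  refine (by fun_prop : DifferentiableAt ℂ (fun z : ℂ => 13 - 4 * z) z).cpow_const ?_
  refine Complex.mem_slitPlane_iff.mpr (Or.inl ?_)
  have := (abs_le.mp ((Complex.abs_re_le_norm z).trans hz)).2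
  simp only [Complex.sub_re, Complex.mul_re]
  norm_num
  linarith

end QuadraticBranch

/-- Let `φ(z) = 1/(3 - z - z²)`, with exterior map `φₑ = ρ ∘ φ ∘ ρ`, `ρ(z) = 1/conj z`.
Then `φₑ(w) = 3 - 1/w - 1/w²` (for `w ≠ 0`), and the two branches
`σⱼ(z) = (1 ± √(13 - 4z))/(2(3 - z))` (principal square root, realized as `c ^ (1/2)`)
are holomorphic on the closed unit disc, satisfy `φₑ(σⱼ(z)) = z` there, map the open unit
disc into itself, and are nonvanishing on the closed unit disc. -/
theorem stmt_11 (φ φe σ₁ σ₂ : ℂ → ℂ)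
    (hφ : ∀ z, φ z = (3 - z - z ^ 2)⁻¹)
    (hφe : ∀ w, φe w = ((starRingEnd ℂ) (φ ((starRingEnd ℂ) w)⁻¹))⁻¹)
    (hσ₁ : ∀ z, σ₁ z = (1 + (13 - 4 * z) ^ ((1 : ℂ) / 2)) / (2 * (3 - z)))
    (hσ₂ : ∀ z, σ₂ z = (1 - (13 - 4 * z) ^ ((1 : ℂ) / 2)) / (2 * (3 - z))) :
    (∀ w : ℂ, w ≠ 0 → φe w = 3 - 1 / w - 1 / w ^ 2)
    ∧ (∀ z ∈ closedBall (0 : ℂ) 1, DifferentiableAt ℂ σ₁ z ∧ DifferentiableAt ℂ σ₂ z)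
    ∧ (∀ z ∈ closedBall (0 : ℂ) 1, φe (σ₁ z) = z ∧ φe (σ₂ z) = z)
    ∧ Set.MapsTo σ₁ (ball 0 1) (ball 0 1)
    ∧ Set.MapsTo σ₂ (ball 0 1) (ball 0 1)
    ∧ (∀ z ∈ closedBall (0 : ℂ) 1, σ₁ z ≠ 0 ∧ σ₂ z ≠ 0) := by
  have hφe' (w : ℂ) : φe w = 3 - 1 / w - 1 / w ^ 2 := by
    simp only [hφe, hφ, map_inv₀, map_sub, map_pow, Complex.conj_conj, map_ofNat, inv_inv]
    ring
  have hσ₂' (z : ℂ) : σ₂ z = (1 + -(13 - 4 * z) ^ ((1 : ℂ) / 2)) / (2 * (3 - z)) := by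
    rw [hσ₂, sub_eq_add_neg]
  have hsq (z : ℂ) : ((13 - 4 * z) ^ ((1 : ℂ) / 2)) ^ 2 = 13 - 4 * z := cpow_one_half_sq _
  have hsq' (z : ℂ) : (-(13 - 4 * z) ^ ((1 : ℂ) / 2)) ^ 2 = 13 - 4 * z := (neg_sq _).trans (hsq z)
  have hz3 {z : ℂ} (hz : z ∈ closedBall (0 : ℂ) 1) : z ≠ 3 := by
    rintro rfl; norm_num at hz
  have hden {z : ℂ} (hz : z ∈ closedBall (0 : ℂ) 1) : 2 * (3 - z) ≠ 0 :=
    mul_ne_zero two_ne_zero (sub_ne_zero.mpr (hz3 hz).symm)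
  refine ⟨fun w _ ↦ hφe' w, fun z hz ↦ ⟨?_, ?_⟩, fun z hz ↦ ⟨?_, ?_⟩, fun z hz ↦ ?_, fun z hz ↦ ?_,
    fun z hz ↦ ⟨?_, ?_⟩⟩
  · rw [show σ₁ = _ from funext hσ₁]
    exact ((differentiableAt_cpow_one_half_thirteen_sub (mem_closedBall_zero_iff.mp hz)).const_add
      1).div (by fun_prop) (hden hz)
  · rw [show σ₂ = _ from funext hσ₂]
    exact ((differentiableAt_cpow_one_half_thirteen_sub (mem_closedBall_zero_iff.mp hz)).const_sub
      1).div (by fun_prop) (hden hz)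
  · rw [hφe', hσ₁]; exact three_sub_inv_sub_inv_sq_one_add_div (hsq z) (hz3 hz)
  · rw [hφe', hσ₂']; exact three_sub_inv_sub_inv_sq_one_add_div (hsq' z) (hz3 hz)
  · rw [mem_ball_zero_iff, hσ₁]; exact norm_one_add_div_lt_one (hsq z) (mem_ball_zero_iff.mp hz)
  · rw [mem_ball_zero_iff, hσ₂']; exact norm_one_add_div_lt_one (hsq' z) (mem_ball_zero_iff.mp hz)
  · rw [hσ₁]; exact one_add_div_ne_zero (hsq z) (hz3 hz)
  · rw [hσ₂']; exact one_add_div_ne_zero (hsq' z) (hz3 hz)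
end

section
/- For d ≥ 2, the map φ(z) = 1/((d+1) − z − z² − ⋯ − z^d) sends the closed unit disc into 𝕌 ∪ {1}, taking 1 to 1 and every other point of the unit circle into the open unit disc 𝕌. -/
/-!
On the closed unit disc `Re (z ^ k) ≤ ‖z‖ ^ k ≤ 1`, and `Re z < 1` unless `z = 1`. Hence for
`z ≠ 1` the denominator `(d + 1) - ∑ z ^ k` has real part, and so norm, greater than `1`.
-/

open Metric

lemma Complex.re_lt_one_of_norm_le_one {z : ℂ} (hz : ‖z‖ ≤ 1) (hz1 : z ≠ 1) : z.re < 1 := by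
  by_contra! hre
  have hnorm : z.re = ‖z‖ := le_antisymm (Complex.re_le_norm z) (hz.trans hre)
  have him : z.im = 0 := Complex.abs_re_eq_norm.1 (by rw [abs_of_nonneg (by linarith), hnorm])
  exact hz1 (Complex.ext (by rw [Complex.one_re]; linarith) (by simpa using him))

lemma re_sum_Icc_pow_lt {d : ℕ} (hd : 1 ≤ d) {z : ℂ} (hz : ‖z‖ ≤ 1) (hz1 : z ≠ 1) :
    (∑ k ∈ Finset.Icc 1 d, z ^ k).re < d := by
  have hle : ∀ k, (z ^ k).re ≤ 1 := fun k =>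
    (Complex.re_le_norm _).trans (by rw [norm_pow]; exact pow_le_one₀ (norm_nonneg z) hz)
  calc (∑ k ∈ Finset.Icc 1 d, z ^ k).re = ∑ k ∈ Finset.Icc 1 d, (z ^ k).re := Complex.re_sum _ _
    _ < ∑ _k ∈ Finset.Icc 1 d, (1 : ℝ) :=
      Finset.sum_lt_sum (fun k _ => hle k)
        ⟨1, Finset.mem_Icc.2 ⟨le_rfl, hd⟩, by simpa using z.re_lt_one_of_norm_le_one hz hz1⟩
    _ = d := by simp

lemma one_lt_norm_natCast_add_one_sub_sum_Icc_pow {d : ℕ} (hd : 1 ≤ d) {z : ℂ} (hz : ‖z‖ ≤ 1)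
    (hz1 : z ≠ 1) : 1 < ‖((d : ℂ) + 1) - ∑ k ∈ Finset.Icc 1 d, z ^ k‖ := by
  refine lt_of_lt_of_le ?_ (Complex.re_le_norm _)
  simp only [Complex.sub_re, Complex.add_re, Complex.natCast_re, Complex.one_re]
  linarith [re_sum_Icc_pow_lt hd hz hz1]

/-- For `d ≥ 2`, the map `φ(z) = 1/((d+1) - z - z² - ⋯ - z^d)` sends the closed unit disc
into `𝕌 ∪ {1}`, taking `1` to `1` and every other point of the unit circle into the open
unit disc `𝕌`. -/
theorem stmt_16 (d : ℕ) (hd : 2 ≤ d) (φ : ℂ → ℂ)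
    (hφ : ∀ z, φ z = (((d : ℂ) + 1) - ∑ k ∈ Finset.Icc 1 d, z ^ k)⁻¹) :
    Set.MapsTo φ (closedBall 0 1) (ball 0 1 ∪ {1})
    ∧ φ 1 = 1
    ∧ (∀ z : ℂ, ‖z‖ = 1 → z ≠ 1 → φ z ∈ ball (0 : ℂ) 1) := by
  have hφ_one : φ 1 = 1 := by simp [hφ]
  have hφ_ball : ∀ z : ℂ, ‖z‖ ≤ 1 → z ≠ 1 → φ z ∈ ball (0 : ℂ) 1 := fun z hz hz1 => by
    rw [mem_ball_zero_iff, hφ, norm_inv]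
    exact inv_lt_one_of_one_lt₀ (one_lt_norm_natCast_add_one_sub_sum_Icc_pow (by omega) hz hz1)
  refine ⟨fun z hz => ?_, hφ_one, fun z hz hz1 => hφ_ball z hz.le hz1⟩
  by_cases hz1 : z = 1
  · exact Or.inr (by simp [hz1, hφ_one])
  · exact Or.inl (hφ_ball z (mem_closedBall_zero_iff.1 hz) hz1)
end
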